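/- With the same setup as the pairwise relaxed partitions above (labels ℓ : P → {1,2,3}, directions D : P → {L,R}, and for each pair {i,j} a prefix/suffix partition P = P^{ij}_i ∪ P^{ij}_j whose parts left-like their sites relative to the pair): if P^{12}_2 ∩ P^{23}_2 ≠ ∅, then (a) every v ∈ P^{12}_2 ∩ P^{23}_2 satisfies ℓ(v) = 2 or D(v) = R; (b) every v ∈ P^{12}_1 satisfies ℓ(v) = 1 or D(v) = R; and (c) every v ∈ P^{23}_3 satisfies ℓ(v) = 3 or D(v) = R. -/

import Mathlib

/-- The direction (left or right) from which a shortest path enters the separator path. -/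
inductive Dir | L | R
deriving DecidableEq

/-- `v` left-likes site `i` relative to the pair `{i, j}`: its true site is `i`, or its
shortest path enters from the right, or its true site is outside the pair. -/
def leftLikes {P : Type} (ℓ : P → Fin 3) (D : P → Dir) (i j : Fin 3) (v : P) : Prop :=
  ℓ v = i ∨ D v = Dir.R ∨ (ℓ v ≠ i ∧ ℓ v ≠ j)

/-
If `v` does not enter from the right, left-liking `i` relative to `{i, j}` just says `ℓ v ≠ j`.
Two such constraints with different excluded sites pin `ℓ v` down to the third site. For (b) and
(c) the nonempty middle part `P^{12}_2 ∩ P^{23}_2` puts the two cuts in order: a point `w` of it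
lies above all of the prefix `P^{12}_1` and below all of the suffix `P^{23}_3`, so
`P^{12}_1 ⊆ P^{23}_2` and `P^{23}_3 ⊆ P^{12}_2`.
-/

theorem lt_of_mem_of_mem_of_isLowerSet {α : Type*} [LinearOrder α] {s t : Set α}
    (hs : IsLowerSet s) (hst : Disjoint s t) {a b : α} (ha : a ∈ s) (hb : b ∈ t) : a < b :=
  lt_of_not_ge fun hba => Set.disjoint_left.mp hst (hs hba ha) hb

section LeftLikes

variable {P : Type} {ℓ : P → Fin 3} {D : P → Dir} {v : P}

theorem leftLikes.ne_or_eq_R {i j : Fin 3} (h : leftLikes ℓ D i j v) (hij : i ≠ j) :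
    ℓ v ≠ j ∨ D v = Dir.R := by
  rcases h with h | h | ⟨-, h⟩
  · exact .inl (h ▸ hij)
  · exact .inr h
  · exact .inl h

theorem leftLikes.eq_or_eq_R_of_leftLikes {i j i' j' k : Fin 3} (h : leftLikes ℓ D i j v)
    (h' : leftLikes ℓ D i' j' v) (hij : i ≠ j := by decide) (hij' : i' ≠ j' := by decide)
    (hjj' : j ≠ j' := by decide) (hkj : k ≠ j := by decide) (hkj' : k ≠ j' := by decide) :
    ℓ v = k ∨ D v = Dir.R := by
  rcases h.ne_or_eq_R hij with h | hR
  · rcases h'.ne_or_eq_R hij' with h' | hR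
    · left
      omega
    · exact .inr hR
  · exact .inr hR

end LeftLikes

-- Sites `1, 2, 3` are `0, 1, 2 : Fin 3`.
theorem stmt11_general {P : Type} [LinearOrder P]
    (ℓ : P → Fin 3) (D : P → Dir)
    (A12 B12 A23 B23 : Set P)
    (h12u : A12 ∪ B12 = Set.univ) (h12d : Disjoint A12 B12)
    (h12p : ∀ a b : P, a ≤ b → b ∈ A12 → a ∈ A12)
    (h12A : ∀ v ∈ A12, leftLikes ℓ D 0 1 v) (h12B : ∀ v ∈ B12, leftLikes ℓ D 1 0 v)
    (h23d : Disjoint A23 B23)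
    (h23p : ∀ a b : P, a ≤ b → b ∈ A23 → a ∈ A23)
    (h23A : ∀ v ∈ A23, leftLikes ℓ D 1 2 v) (h23B : ∀ v ∈ B23, leftLikes ℓ D 2 1 v)
    (hne : (B12 ∩ A23).Nonempty) :
    (∀ v ∈ B12 ∩ A23, ℓ v = 1 ∨ D v = Dir.R) ∧
      (∀ v ∈ A12, ℓ v = 0 ∨ D v = Dir.R) ∧
      (∀ v ∈ B23, ℓ v = 2 ∨ D v = Dir.R) := by
  obtain ⟨w, hwB12, hwA23⟩ := hne
  have hA12 : IsLowerSet A12 := fun a b hba ha => h12p b a hba ha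
  have hA23 : IsLowerSet A23 := fun a b hba ha => h23p b a hba ha
  refine ⟨fun v hv => ?_, fun v hv => ?_, fun v hv => ?_⟩
  · exact (h12B v hv.1).eq_or_eq_R_of_leftLikes (h23A v hv.2)
  · have hvw := lt_of_mem_of_mem_of_isLowerSet hA12 h12d hv hwB12
    exact (h12A v hv).eq_or_eq_R_of_leftLikes (h23A v (hA23 hvw.le hwA23))
  · have hwv := lt_of_mem_of_mem_of_isLowerSet hA23 h23d hwA23 hv
    have hvB12 : v ∈ B12 := (h12u.symm ▸ Set.mem_univ v : v ∈ A12 ∪ B12).resolve_left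
      fun hvA12 => Set.disjoint_left.mp h12d (hA12 hwv.le hvA12) hwB12
    exact (h12B v hvB12).eq_or_eq_R_of_leftLikes (h23B v hv)

/-- Combining pairwise relaxed partitions: in the case `P^{12}_2 ∩ P^{23}_2 ≠ ∅`, the middle
part `P^{12}_2 ∩ P^{23}_2` is correct for site `2`, and `P^{12}_1`, `P^{23}_3` are correct for
sites `1` and `3` respectively. (Sites `1,2,3` are represented by `0,1,2 : Fin 3`.) -/
theorem stmt11 {P : Type} [LinearOrder P]
    (ℓ : P → Fin 3) (D : P → Dir)
    (A12 B12 A23 B23 : Set P)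
    (h12u : A12 ∪ B12 = Set.univ) (h12d : Disjoint A12 B12)
    (h12p : ∀ a b : P, a ≤ b → b ∈ A12 → a ∈ A12)
    (h12A : ∀ v ∈ A12, leftLikes ℓ D 0 1 v) (h12B : ∀ v ∈ B12, leftLikes ℓ D 1 0 v)
    (h23u : A23 ∪ B23 = Set.univ) (h23d : Disjoint A23 B23)
    (h23p : ∀ a b : P, a ≤ b → b ∈ A23 → a ∈ A23)
    (h23A : ∀ v ∈ A23, leftLikes ℓ D 1 2 v) (h23B : ∀ v ∈ B23, leftLikes ℓ D 2 1 v)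
    (hne : (B12 ∩ A23).Nonempty) :
    (∀ v ∈ B12 ∩ A23, ℓ v = 1 ∨ D v = Dir.R) ∧
      (∀ v ∈ A12, ℓ v = 0 ∨ D v = Dir.R) ∧
      (∀ v ∈ B23, ℓ v = 2 ∨ D v = Dir.R) :=
  stmt11_general ℓ D A12 B12 A23 B23 h12u h12d h12p h12A h12B h23d h23p h23A h23B hne
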